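/- Let e₁ and e₂ be nonparallel unit vectors in ℝ² and let α be the angle between them. Then for every vector p ∈ ℝ², (1/2)((p·e₁)² + (p·e₂)²) ≤ |p|² ≤ (3/sin²α)((p·e₁)² + (p·e₂)²). -/
import Mathlib


open RealInnerProductSpace

set_option maxHeartbeats 1000000 in
theorem stmt0 (e₁ e₂ : EuclideanSpace ℝ (Fin 2))
    (h1 : ‖e₁‖ = 1) (h2 : ‖e₂‖ = 1)
    (hind : LinearIndependent ℝ ![e₁, e₂]) (p : EuclideanSpace ℝ (Fin 2)) :
    (1 / 2) * (⟪p, e₁⟫ ^ 2 + ⟪p, e₂⟫ ^ 2) ≤ ‖p‖ ^ 2 ∧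
      ‖p‖ ^ 2 ≤ 3 / (Real.sin (InnerProductGeometry.angle e₁ e₂)) ^ 2 *
        (⟪p, e₁⟫ ^ 2 + ⟪p, e₂⟫ ^ 2) := by
  set c : ℝ := ⟪e₁, e₂⟫ with hc
  -- e₁ ≠ e₂ and e₁ ≠ -e₂
  have hpair := LinearIndependent.pair_iff.mp hind
  have hne1 : e₁ ≠ e₂ := by
    intro h
    have := (hpair 1 (-1) (by rw [h]; simp)).1
    norm_num at this
  have hne2 : e₁ ≠ -e₂ := by
    intro h
    have := (hpair 1 1 (by rw [h]; simp)).1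
    norm_num at this
  have hc2 : c < 1 := by
    have := inner_lt_norm_mul_iff_real (x := e₁) (y := e₂)
    rw [h1, h2, one_mul] at this
    exact this.mpr (by simpa using hne1)
  have hc1 : -1 < c := by
    have := inner_lt_norm_mul_iff_real (x := e₁) (y := -e₂)
    rw [h1, norm_neg, h2, one_mul] at this
    have h' := this.mpr (by simpa using hne2)
    rw [inner_neg_right] at h'
    linarith
  -- sin² of the angle
  have hsin : (Real.sin (InnerProductGeometry.angle e₁ e₂)) ^ 2 = 1 - c ^ 2 := by
    rw [Real.sin_sq, InnerProductGeometry.cos_angle, h1, h2, ← hc]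
    norm_num
  -- coordinates
  have hcard : Fintype.card (Fin 2) = Module.finrank ℝ (EuclideanSpace ℝ (Fin 2)) := by
    simp
  set B := basisOfLinearIndependentOfCardEqFinrank hind hcard with hB
  have hBcoe : ⇑B = ![e₁, e₂] := coe_basisOfLinearIndependentOfCardEqFinrank hind hcard
  set x : ℝ := B.repr p 0 with hx
  set y : ℝ := B.repr p 1 with hy
  have hp : p = x • e₁ + y • e₂ := by
    have := B.sum_repr p
    rw [Fin.sum_univ_two, hBcoe] at this
    simp only [Matrix.cons_val_zero, Matrix.cons_val_one, Matrix.head_cons] at this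
    rw [← this]
  have he1 : ⟪e₁, e₁⟫ = (1 : ℝ) := by
    rw [real_inner_self_eq_norm_sq, h1]; norm_num
  have he2 : ⟪e₂, e₂⟫ = (1 : ℝ) := by
    rw [real_inner_self_eq_norm_sq, h2]; norm_num
  have he21 : ⟪e₂, e₁⟫ = c := by rw [real_inner_comm]
  have ha : ⟪p, e₁⟫ = x + y * c := by
    rw [hp, inner_add_left, real_inner_smul_left, real_inner_smul_left, he1, he21]
    ring
  have hb : ⟪p, e₂⟫ = x * c + y := by
    rw [hp, inner_add_left, real_inner_smul_left, real_inner_smul_left, he2, ← hc]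
    ring
  have hnorm : ‖p‖ ^ 2 = x ^ 2 + y ^ 2 + 2 * x * y * c := by
    rw [← real_inner_self_eq_norm_sq, hp]
    simp only [inner_add_left, inner_add_right, real_inner_smul_left, real_inner_smul_right,
      he1, he2, he21, ← hc]
    ring
  constructor
  · rw [ha, hb, hnorm]
    nlinarith [mul_nonneg (add_nonneg (sq_nonneg x) (sq_nonneg y))
      (by nlinarith : (0:ℝ) ≤ 1 - c ^ 2)]
  · rw [hsin, ha, hb, hnorm, div_mul_eq_mul_div, le_div_iff₀ (by nlinarith : (0:ℝ) < 1 - c ^ 2)]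
    nlinarith [mul_nonneg (mul_nonneg (sq_nonneg (1+c)) (by linarith : (0:ℝ) ≤ 2+c)) (sq_nonneg (x+y)),
      mul_nonneg (mul_nonneg (sq_nonneg (1-c)) (by linarith : (0:ℝ) ≤ 2-c)) (sq_nonneg (x-y))]
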